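/- A permutation w ∈ S_n is a prism if and only if there exist a permutation v ∈ S_n and a letter i ∈ {1,…,n−1} such that: v ⪯ w in Bruhat order, supp(w) \ supp(v) = {i}, some reduced word of v is obtained by deleting one occurrence of i from some reduced word of w, and B(w) is order-isomorphic to C₂ × B(v) with the componentwise order. -/

import Mathlib

/-- The adjacent transposition `σ_i`, swapping `i` and `i+1` (acting on `ℕ`). -/
def sigmaT (i : ℕ) : Equiv.Perm ℕ := Equiv.swap i (i + 1)

/-- The permutation given by a word (product of simple reflections, composed as functions). -/
def wordProd (s : List ℕ) : Equiv.Perm ℕ := (s.map sigmaT).prod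

/-- `s` is a word for `w` in `S_n`: all letters lie in `{1,…,n-1}` and the product is `w`. -/
def IsWord (n : ℕ) (w : Equiv.Perm ℕ) (s : List ℕ) : Prop :=
  (∀ j ∈ s, 1 ≤ j ∧ j ≤ n - 1) ∧ wordProd s = w

/-- `s` is a reduced word for `w`: a word of minimal length. -/
def IsReducedWord (n : ℕ) (w : Equiv.Perm ℕ) (s : List ℕ) : Prop :=
  IsWord n w s ∧ ∀ t : List ℕ, IsWord n w t → s.length ≤ t.length

/-- The Coxeter length `ℓ(w)`. -/
noncomputable def ell (n : ℕ) (w : Equiv.Perm ℕ) : ℕ :=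
  sInf {k | ∃ s : List ℕ, IsWord n w s ∧ s.length = k}

/-- The support of `w`: letters appearing in reduced words of `w`. -/
def supp (n : ℕ) (w : Equiv.Perm ℕ) : Set ℕ :=
  {i | ∃ s : List ℕ, IsReducedWord n w s ∧ i ∈ s}

/-- Bruhat order: some reduced word of `v` is a subsequence of some reduced word of `w`. -/
def BruhatLE (n : ℕ) (v w : Equiv.Perm ℕ) : Prop :=
  ∃ s t : List ℕ, IsReducedWord n v s ∧ IsReducedWord n w t ∧ s.Sublist t

/-- The principal order ideal `B(w)`, as a type. -/
def IdealB (n : ℕ) (w : Equiv.Perm ℕ) : Type := {v : Equiv.Perm ℕ // BruhatLE n v w}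

/-- The Bruhat order restricted to `B(w)`. -/
def IdealLE (n : ℕ) (w : Equiv.Perm ℕ) (a b : IdealB n w) : Prop := BruhatLE n a.1 b.1

/-- Two relations are isomorphic (order isomorphism of the corresponding ordered sets). -/
def RelIsomorphic {α β : Type*} (ra : α → α → Prop) (rb : β → β → Prop) : Prop :=
  ∃ e : α ≃ β, ∀ a b : α, ra a b ↔ rb (e a) (e b)

/-- `w` is a prism: `B(w) ≅ C₂ × X` for some partially ordered set `X`
(the two-element chain `C₂` realized as `Bool`), with the componentwise order. -/
def IsPrism (n : ℕ) (w : Equiv.Perm ℕ) : Prop :=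
  ∃ (X : Type) (rX : X → X → Prop), IsPartialOrder X rX ∧
    RelIsomorphic (IdealLE n w)
      (fun p q : Bool × X => (p.1 ≤ q.1) ∧ rX p.2 q.2)

/-- `w` belongs to `S_n`: it fixes every point outside `{1,…,n}`. -/
def MemSymm (n : ℕ) (w : Equiv.Perm ℕ) : Prop :=
  ∀ x : ℕ, x ∉ Set.Icc 1 n → w x = x

/-- `i` is unconfined in the word `s`: it appears exactly once, not between two copies
of `i+1` and not between two copies of `i-1`. -/
def Unconfined (i : ℕ) (s : List ℕ) : Prop :=
  s.count i = 1 ∧ ∀ a b : List ℕ, s = a ++ i :: b →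
    ¬((i + 1) ∈ a ∧ (i + 1) ∈ b) ∧ ¬((i - 1) ∈ a ∧ (i - 1) ∈ b)

/-- `B(w) ≅ C₂ × B(v)` with the componentwise order. -/
def IsoC2TimesIdeal (n : ℕ) (w v : Equiv.Perm ℕ) : Prop :=
  RelIsomorphic (IdealLE n w)
    (fun p q : Bool × IdealB n v => (p.1 ≤ q.1) ∧ IdealLE n v p.2 q.2)

/-!
The Bruhat order on `S_n` coincides with Ehresmann's rank dominance: `v ≤ w` iff
`#{x < a | b ≤ v x} ≤ #{x < a | b ≤ w x}` for all `a, b`. Left multiplication by `σ_i` only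
changes the column `b = i + 1` of these counts, which gives the lifting lemmas; by induction
along a reduced word of `w` they yield the subword property with respect to *every* reduced word
of `w`, and the chain property (every `v < w` lies below an element of length `ℓ(w) - 1`).

If `B(w) ≅ C₂ × X`, the element `v` corresponding to `(0, ⊤)` is a coatom whose ideal is `X`, so by
the two properties a reduced word of `v` arises from a reduced word of `w` by deleting one letter
`i`. The element corresponding to `(1, ⊥)` is an atom `σ_j` not below `v`, so `j` lies in
`supp w \ supp v`; as supports are the letter sets of reduced words, this forces `j = i`.
Conversely `B(v)` is itself a partial order, so the factorization exhibits `w` as a prism.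
-/

open Equiv Finset
open scoped List

section Transpositions

@[simp] lemma sigmaT_mul_self (i : ℕ) : sigmaT i * sigmaT i = 1 := swap_mul_self i (i + 1)

@[simp] lemma sigmaT_inv (i : ℕ) : (sigmaT i)⁻¹ = sigmaT i := swap_inv i (i + 1)

@[simp] lemma sigmaT_mul_sigmaT_mul (i : ℕ) (w : Perm ℕ) : sigmaT i * (sigmaT i * w) = w := by
  rw [← mul_assoc, sigmaT_mul_self, one_mul]

@[simp] lemma sigmaT_apply_self (i : ℕ) : sigmaT i i = i + 1 := swap_apply_left i (i + 1)

@[simp] lemma sigmaT_apply_add_one (i : ℕ) : sigmaT i (i + 1) = i := swap_apply_right i (i + 1)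

@[simp] lemma sigmaT_mul_inv_apply (i : ℕ) (w : Perm ℕ) (x : ℕ) :
    (sigmaT i * w)⁻¹ x = w⁻¹ (sigmaT i x) := by
  rw [mul_inv_rev, sigmaT_inv, Perm.mul_apply]

lemma sigmaT_injective : Function.Injective sigmaT := by
  intro i j h
  have := congrArg (· i) h
  simp only [sigmaT, swap_apply_def] at this
  split_ifs at this <;> omega

lemma sigmaT_ne_one (i : ℕ) : sigmaT i ≠ 1 := fun h => by
  simpa using congrArg (· i) h

lemma sigmaT_lt_sigmaT_iff {i x y : ℕ} :
    sigmaT i y < sigmaT i x ↔ (y < x ∧ ¬(x = i + 1 ∧ y = i)) ∨ (x = i ∧ y = i + 1) := by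
  simp only [sigmaT, swap_apply_def]
  split_ifs <;> omega

lemma le_sigmaT_apply_iff {i b x : ℕ} (hb : b ≠ i + 1) : b ≤ sigmaT i x ↔ b ≤ x := by
  simp only [sigmaT, swap_apply_def]
  split_ifs <;> omega

end Transpositions

section Words

variable {n i : ℕ} {w : Perm ℕ} {s : List ℕ}

@[simp] lemma wordProd_nil : wordProd [] = 1 := rfl

@[simp] lemma wordProd_cons (i : ℕ) (s : List ℕ) : wordProd (i :: s) = sigmaT i * wordProd s := by
  simp [wordProd]

lemma memSymm_one (n : ℕ) : MemSymm n 1 := fun _ _ => rfl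

lemma MemSymm.mul {u v : Perm ℕ} (hu : MemSymm n u) (hv : MemSymm n v) : MemSymm n (u * v) :=
  fun x hx => by rw [Perm.mul_apply, hv x hx, hu x hx]

lemma MemSymm.inv (h : MemSymm n w) : MemSymm n w⁻¹ :=
  fun x hx => Perm.inv_eq_iff_eq.mpr (h x hx).symm

lemma memSymm_sigmaT (h₁ : 1 ≤ i) (h₂ : i ≤ n - 1) : MemSymm n (sigmaT i) := by
  intro x hx
  simp only [Set.mem_Icc, not_and_or, not_le] at hx
  simp only [sigmaT, swap_apply_def]
  split_ifs <;> omega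

lemma MemSymm.apply_le (h : MemSymm n w) {x : ℕ} (hx : x ≤ n) : w x ≤ n := by
  by_contra hwx
  have hfix : w (w x) = w x := h _ (by simp only [Set.mem_Icc]; omega)
  rw [w.injective hfix] at hwx
  omega

lemma IsWord.cons (h : IsWord n w s) (h₁ : 1 ≤ i) (h₂ : i ≤ n - 1) :
    IsWord n (sigmaT i * w) (i :: s) := by
  refine ⟨fun j hj => ?_, by rw [wordProd_cons, h.2]⟩
  rcases List.mem_cons.mp hj with rfl | hj
  exacts [⟨h₁, h₂⟩, h.1 j hj]

lemma IsWord.tail (h : IsWord n w (i :: s)) : IsWord n (wordProd s) s :=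
  ⟨fun j hj => h.1 j (List.mem_cons_of_mem i hj), rfl⟩

lemma IsWord.memSymm (h : IsWord n w s) : MemSymm n w := by
  induction s generalizing w with
  | nil => rw [← h.2]; exact memSymm_one n
  | cons i s ih =>
    obtain ⟨h₁, h₂⟩ := h.1 i List.mem_cons_self
    rw [← h.2, wordProd_cons]
    exact (memSymm_sigmaT h₁ h₂).mul (ih h.tail)

end Words

section Inversions

variable {n i : ℕ} {w : Perm ℕ} {s : List ℕ}

def invSet (w : Perm ℕ) : Set (ℕ × ℕ) := {p | p.1 < p.2 ∧ w p.2 < w p.1}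

noncomputable def nInv (w : Perm ℕ) : ℕ := (invSet w).ncard

@[simp] lemma invSet_one : invSet 1 = ∅ :=
  Set.eq_empty_of_forall_notMem fun _ hp => lt_asymm hp.1 hp.2

@[simp] lemma nInv_one : nInv 1 = 0 := by simp [nInv]

lemma MemSymm.finite_invSet (h : MemSymm n w) : (invSet w).Finite := by
  refine ((Set.finite_Iic n).prod (Set.finite_Iic n)).subset ?_
  rintro ⟨a, b⟩ ⟨hab, hba⟩
  dsimp only at hab hba
  suffices b ≤ n by simp only [Set.mem_prod, Set.mem_Iic]; omega
  by_contra hb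
  have hwb : w b = b := h b (by simp only [Set.mem_Icc]; omega)
  by_cases ha : a ≤ n
  · have := h.apply_le ha
    omega
  · have hwa : w a = a := h a (by simp only [Set.mem_Icc]; omega)
    omega

lemma invSet_sigmaT_mul (h : w⁻¹ i < w⁻¹ (i + 1)) :
    invSet (sigmaT i * w) = insert (w⁻¹ i, w⁻¹ (i + 1)) (invSet w) := by
  ext ⟨a, b⟩
  simp only [invSet, Set.mem_ofPred_eq, Set.mem_insert_iff, Prod.mk.injEq, Perm.mul_apply,
    sigmaT_lt_sigmaT_iff]
  have hpos : w a = i + 1 → w b = i → b < a := by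
    rintro ha hb
    rwa [Perm.eq_inv_iff_eq.mpr ha, Perm.eq_inv_iff_eq.mpr hb]
  constructor
  · rintro ⟨hlt, ⟨hw, -⟩ | ⟨ha, hb⟩⟩
    · exact Or.inr ⟨hlt, hw⟩
    · exact Or.inl ⟨Perm.eq_inv_iff_eq.mpr ha, Perm.eq_inv_iff_eq.mpr hb⟩
  · rintro (⟨rfl, rfl⟩ | ⟨hlt, hw⟩)
    · simpa using h
    · exact ⟨hlt, Or.inl ⟨hw, fun ⟨ha, hb⟩ => by have := hpos ha hb; omega⟩⟩

lemma nInv_sigmaT_mul_of_lt (hf : (invSet w).Finite) (h : w⁻¹ i < w⁻¹ (i + 1)) :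
    nInv (sigmaT i * w) = nInv w + 1 := by
  rw [nInv, invSet_sigmaT_mul h, Set.ncard_insert_of_notMem (fun hmem => by simpa using hmem.2) hf]
  rfl

lemma nInv_sigmaT_mul_of_gt (hf : (invSet w).Finite) (h : w⁻¹ (i + 1) < w⁻¹ i) :
    nInv (sigmaT i * w) + 1 = nInv w := by
  have hasc : (sigmaT i * w)⁻¹ i < (sigmaT i * w)⁻¹ (i + 1) := by simpa using h
  have hset := invSet_sigmaT_mul hasc
  rw [sigmaT_mul_sigmaT_mul] at hset
  have hf' : (invSet (sigmaT i * w)).Finite := hf.subset (hset ▸ Set.subset_insert _ _)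
  simpa using (nInv_sigmaT_mul_of_lt hf' hasc).symm

lemma nInv_sigmaT_mul_le (hf : (invSet w).Finite) : nInv (sigmaT i * w) ≤ nInv w + 1 := by
  rcases lt_trichotomy (w⁻¹ i) (w⁻¹ (i + 1)) with h | h | h
  · exact (nInv_sigmaT_mul_of_lt hf h).le
  · simp at h
  · have := nInv_sigmaT_mul_of_gt hf h
    omega

@[simp] lemma nInv_sigmaT (i : ℕ) : nInv (sigmaT i) = 1 := by
  simpa using nInv_sigmaT_mul_of_lt (i := i) (w := 1) (by simp) (by simp)

lemma exists_lt_apply_of_ne_one (hw : w ≠ 1) : ∃ m, m < w m ∧ ∀ y < m, w y = y := by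
  classical
  have hex : ∃ x, w x ≠ x := by
    by_contra! h
    exact hw (Perm.ext h)
  have hfix : ∀ y < Nat.find hex, w y = y := fun y hy => not_not.mp (Nat.find_min hex hy)
  refine ⟨Nat.find hex, lt_of_le_of_ne (not_lt.mp fun hlt => ?_) (Nat.find_spec hex).symm, hfix⟩
  exact Nat.find_spec hex (w.injective (hfix _ hlt))

lemma MemSymm.exists_descent (h : MemSymm n w) (hw : w ≠ 1) :
    ∃ i, 1 ≤ i ∧ i ≤ n - 1 ∧ w (i + 1) < w i := by
  by_contra! hasc
  have hmono : StrictMonoOn w (Set.Icc 1 n) := by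
    refine strictMonoOn_of_lt_add_one Set.ordConnected_Icc fun a _ ha ha' => ?_
    simp only [Set.mem_Icc] at ha ha'
    exact lt_of_le_of_ne (hasc a ha.1 (by omega)) (w.injective.ne (by omega))
  obtain ⟨m, hm, hfix⟩ := exists_lt_apply_of_ne_one hw
  have hmoved : ∀ x, w x ≠ x → x ∈ Set.Icc 1 n := fun x hx => by_contra fun h' => hx (h x h')
  obtain ⟨k, hk⟩ : ∃ k, w k = m := ⟨w⁻¹ m, w.apply_symm_apply m⟩
  have hmk : m < k := by
    rcases lt_trichotomy k m with hkm | rfl | hkm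
    · have := hfix k hkm
      omega
    · omega
    · exact hkm
  have := hmono (hmoved m hm.ne') (hmoved k (by omega)) hmk
  omega

lemma exists_isWord_length_eq_nInv (h : MemSymm n w) : ∃ s, IsWord n w s ∧ s.length = nInv w := by
  obtain ⟨k, hk⟩ : ∃ k, nInv w = k := ⟨_, rfl⟩
  induction k using Nat.strong_induction_on generalizing w with
  | _ k ih =>
    by_cases hw : w = 1
    · subst hw
      exact ⟨[], ⟨by simp, rfl⟩, by simp_all⟩
    obtain ⟨i, h₁, h₂, hdesc⟩ := h.inv.exists_descent (inv_ne_one.mpr hw)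
    have hlen := nInv_sigmaT_mul_of_gt h.finite_invSet hdesc
    obtain ⟨s, hs, hslen⟩ := ih _ (by omega) ((memSymm_sigmaT h₁ h₂).mul h) rfl
    refine ⟨i :: s, by simpa using hs.cons h₁ h₂, ?_⟩
    rw [List.length_cons]
    omega

lemma nInv_le_length (h : IsWord n w s) : nInv w ≤ s.length := by
  induction s generalizing w with
  | nil => simp [← h.2]
  | cons i s ih =>
    rw [← h.2, wordProd_cons, List.length_cons]
    exact (nInv_sigmaT_mul_le h.tail.memSymm.finite_invSet).trans (by simpa using ih h.tail)

lemma isReducedWord_iff : IsReducedWord n w s ↔ IsWord n w s ∧ s.length = nInv w := by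
  refine ⟨fun h => ⟨h.1, ?_⟩, fun h => ⟨h.1, fun t ht => h.2 ▸ nInv_le_length ht⟩⟩
  obtain ⟨t, ht, htlen⟩ := exists_isWord_length_eq_nInv h.1.memSymm
  exact le_antisymm (htlen ▸ h.2 t ht) (nInv_le_length h.1)

lemma MemSymm.exists_isReducedWord (h : MemSymm n w) : ∃ s, IsReducedWord n w s := by
  obtain ⟨s, hs, hlen⟩ := exists_isWord_length_eq_nInv h
  exact ⟨s, isReducedWord_iff.mpr ⟨hs, hlen⟩⟩

lemma IsReducedWord.length_eq {t : List ℕ} (hs : IsReducedWord n w s) (ht : IsReducedWord n w t) :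
    s.length = t.length :=
  le_antisymm (hs.2 t ht.1) (ht.2 s hs.1)

lemma IsReducedWord.cons {u : Perm ℕ} (hs : IsReducedWord n u s) (h₁ : 1 ≤ i) (h₂ : i ≤ n - 1)
    (h : u⁻¹ i < u⁻¹ (i + 1)) : IsReducedWord n (sigmaT i * u) (i :: s) := by
  rw [isReducedWord_iff] at hs ⊢
  rw [nInv_sigmaT_mul_of_lt hs.1.memSymm.finite_invSet h, List.length_cons, hs.2]
  exact ⟨hs.1.cons h₁ h₂, rfl⟩

lemma IsReducedWord.of_cons (h : IsReducedWord n w (i :: s)) :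
    IsReducedWord n (wordProd s) s ∧ (wordProd s)⁻¹ i < (wordProd s)⁻¹ (i + 1) := by
  have hlen := (isReducedWord_iff.mp h).2
  have hle := nInv_le_length h.1.tail
  have hf := h.1.tail.memSymm.finite_invSet
  rw [← h.1.2, wordProd_cons, List.length_cons] at hlen
  rcases lt_trichotomy ((wordProd s)⁻¹ i) ((wordProd s)⁻¹ (i + 1)) with hasc | heq | hdesc
  · rw [nInv_sigmaT_mul_of_lt hf hasc] at hlen
    exact ⟨isReducedWord_iff.mpr ⟨h.1.tail, by omega⟩, hasc⟩
  · simp at heq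
  · have := nInv_sigmaT_mul_of_gt hf hdesc
    omega

lemma isReducedWord_singleton (h₁ : 1 ≤ i) (h₂ : i ≤ n - 1) : IsReducedWord n (sigmaT i) [i] :=
  isReducedWord_iff.mpr ⟨⟨by simp [h₁, h₂], by simp⟩, by simp⟩

lemma IsReducedWord.eq_singleton (h : IsReducedWord n (sigmaT i) s) : s = [i] := by
  obtain ⟨j, rfl⟩ := List.length_eq_one_iff.mp ((isReducedWord_iff.mp h).2.trans (nInv_sigmaT i))
  have : sigmaT j = sigmaT i := by simpa using h.1.2
  rw [sigmaT_injective this]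

end Inversions

section RankDominance

def rankCount (w : Perm ℕ) (a b : ℕ) : ℕ := #{x ∈ range a | b ≤ w x}

def RankLE (v w : Perm ℕ) : Prop := ∀ a b, rankCount v a b ≤ rankCount w a b

variable {i : ℕ} {u v w z : Perm ℕ}

lemma RankLE.refl (w : Perm ℕ) : RankLE w w := fun _ _ => le_rfl

lemma RankLE.trans (h₁ : RankLE u v) (h₂ : RankLE v w) : RankLE u w :=
  fun a b => (h₁ a b).trans (h₂ a b)

lemma rankCount_add_one_left (w : Perm ℕ) (a b : ℕ) :
    rankCount w (a + 1) b = rankCount w a b + if b ≤ w a then 1 else 0 := by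
  simp only [rankCount, card_filter, sum_range_succ]

lemma rankCount_eq_add_one_right (w : Perm ℕ) (a b : ℕ) :
    rankCount w a b = rankCount w a (b + 1) + if w⁻¹ b < a then 1 else 0 := by
  have hind : (if w⁻¹ b < a then 1 else 0) = ∑ x ∈ range a, if x = w⁻¹ b then 1 else 0 := by
    simp
  simp only [rankCount, card_filter, hind, ← sum_add_distrib, Perm.eq_inv_iff_eq]
  refine sum_congr rfl fun x _ => ?_
  split_ifs <;> omega

lemma rankCount_sigmaT_mul_of_ne {b : ℕ} (hb : b ≠ i + 1) (w : Perm ℕ) (a : ℕ) :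
    rankCount (sigmaT i * w) a b = rankCount w a b := by
  simp only [rankCount, Perm.mul_apply, le_sigmaT_apply_iff hb]

lemma rankCount_column (w : Perm ℕ) (i a : ℕ) :
    rankCount w a i = rankCount w a (i + 2) + (if w⁻¹ (i + 1) < a then 1 else 0) +
        (if w⁻¹ i < a then 1 else 0) ∧
      rankCount w a (i + 1) = rankCount w a (i + 2) + (if w⁻¹ (i + 1) < a then 1 else 0) ∧
      rankCount (sigmaT i * w) a (i + 1) = rankCount w a (i + 2) + if w⁻¹ i < a then 1 else 0 := by
  have h₀ := rankCount_eq_add_one_right w a i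
  have h₁ := rankCount_eq_add_one_right w a (i + 1)
  have hσ := rankCount_eq_add_one_right (sigmaT i * w) a (i + 1)
  rw [rankCount_sigmaT_mul_of_ne (b := i + 1 + 1) (by omega), sigmaT_mul_inv_apply,
    sigmaT_apply_add_one] at hσ
  rw [show i + 1 + 1 = i + 2 from rfl] at h₁ hσ
  exact ⟨by omega, h₁, hσ⟩

lemma RankLE.antisymm (h₁ : RankLE v w) (h₂ : RankLE w v) : v = w := by
  have hle : ∀ a b, b ≤ v a ↔ b ≤ w a := fun a b => by
    have hv := rankCount_add_one_left v a b
    have hw := rankCount_add_one_left w a b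
    have := h₁ a b; have := h₂ a b; have := h₁ (a + 1) b; have := h₂ (a + 1) b
    split_ifs at hv hw <;> omega
  exact Perm.ext fun a => le_antisymm ((hle a _).mp le_rfl) ((hle a _).mpr le_rfl)

lemma RankLE.eq_one (h : RankLE v 1) : v = 1 := by
  by_contra hv
  obtain ⟨m, hm, -⟩ := exists_lt_apply_of_ne_one hv
  have hpos : 0 < rankCount v (m + 1) (m + 1) :=
    card_pos.mpr ⟨m, by simp only [mem_filter, mem_range]; omega⟩
  have hzero : rankCount 1 (m + 1) (m + 1) = 0 := by
    refine card_eq_zero.mpr (filter_eq_empty_iff.mpr fun x hx => ?_)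
    simp only [mem_range] at hx
    simp only [Perm.one_apply]
    omega
  have := h (m + 1) (m + 1)
  omega

lemma rankLE_sigmaT_mul_self (hz : z⁻¹ i < z⁻¹ (i + 1)) : RankLE z (sigmaT i * z) := by
  intro a b
  rcases eq_or_ne b (i + 1) with rfl | hb
  · obtain ⟨-, hz₁, hσz⟩ := rankCount_column z i a
    rw [hz₁, hσz]
    split_ifs <;> omega
  · rw [rankCount_sigmaT_mul_of_ne hb]

lemma RankLE.sigmaT_mul_left (h : RankLE v z) (hz : z⁻¹ (i + 1) < z⁻¹ i) :
    RankLE (sigmaT i * v) z := by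
  intro a b
  rcases eq_or_ne b (i + 1) with rfl | hb
  · obtain ⟨hv₀, hv₁, hσv⟩ := rankCount_column v i a
    obtain ⟨hz₀, hz₁, -⟩ := rankCount_column z i a
    have := h a i; have := h a (i + 1); have := h a (i + 2)
    rw [hσv]
    split_ifs at * <;> omega
  · simpa only [rankCount_sigmaT_mul_of_ne hb] using h a b

lemma RankLE.sigmaT_mul (h : RankLE v (sigmaT i * z)) (hz : z⁻¹ i < z⁻¹ (i + 1)) :
    RankLE (sigmaT i * v) (sigmaT i * z) :=
  h.sigmaT_mul_left (by simpa using hz)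

lemma RankLE.le_of_le_sigmaT_mul (h : RankLE v (sigmaT i * z)) (a : ℕ) :
    rankCount v a i ≤ rankCount z a i ∧
      rankCount v a (i + 1) ≤ rankCount z a (i + 2) + (if z⁻¹ i < a then 1 else 0) ∧
      rankCount v a (i + 2) ≤ rankCount z a (i + 2) := by
  have h₀ := h a i
  have h₁ := h a (i + 1)
  have h₂ := h a (i + 2)
  rw [rankCount_sigmaT_mul_of_ne (b := i) (by omega)] at h₀
  rw [rankCount_sigmaT_mul_of_ne (b := i + 2) (by omega)] at h₂
  rw [(rankCount_column z i a).2.2] at h₁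
  exact ⟨h₀, h₁, h₂⟩

lemma RankLE.sigmaT_mul_of_descent (h : RankLE v (sigmaT i * z)) (hv : v⁻¹ (i + 1) < v⁻¹ i) :
    RankLE (sigmaT i * v) z := by
  intro a b
  rcases eq_or_ne b (i + 1) with rfl | hb
  · obtain ⟨hv₀, hv₁, hσv⟩ := rankCount_column v i a
    obtain ⟨hz₀, hz₁, hσz⟩ := rankCount_column z i a
    obtain ⟨h₀, h₁, h₂⟩ := h.le_of_le_sigmaT_mul a
    rw [hσv, hz₁]
    split_ifs at * <;> omega
  · simpa only [rankCount_sigmaT_mul_of_ne hb] using h a b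

lemma RankLE.of_ascent (h : RankLE v (sigmaT i * z)) (hv : v⁻¹ i < v⁻¹ (i + 1)) : RankLE v z := by
  intro a b
  rcases eq_or_ne b (i + 1) with rfl | hb
  · obtain ⟨hv₀, hv₁, hσv⟩ := rankCount_column v i a
    obtain ⟨hz₀, hz₁, hσz⟩ := rankCount_column z i a
    obtain ⟨h₀, h₁, h₂⟩ := h.le_of_le_sigmaT_mul a
    rw [hv₁, hz₁]
    split_ifs at * <;> omega
  · simpa only [rankCount_sigmaT_mul_of_ne hb] using h a b

end RankDominance

lemma List.Sublist.exists_eq_append_cons_of_length_add_one {α : Type*} {l₁ l₂ : List α}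
    (h : l₁ <+ l₂) (hlen : l₁.length + 1 = l₂.length) :
    ∃ a x b, l₂ = a ++ x :: b ∧ l₁ = a ++ b := by
  induction h with
  | slnil => simp at hlen
  | @cons l₁ l₂ x h _ =>
    exact ⟨[], x, l₂, rfl, h.eq_of_length (by simpa using hlen)⟩
  | @cons_cons l₁ l₂ x _ ih =>
    obtain ⟨a, y, b, rfl, rfl⟩ := ih (by simpa using hlen)
    exact ⟨x :: a, y, b, rfl, rfl⟩

section Subword

variable {n : ℕ} {v w : Perm ℕ} {s t : List ℕ}

lemma rankLE_of_sublist (ht : IsReducedWord n w t) (hs : s <+ t) : RankLE (wordProd s) w := by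
  induction t generalizing w s with
  | nil => rw [List.sublist_nil.mp hs, ← ht.1.2]; exact RankLE.refl _
  | cons i t ih =>
    obtain ⟨ht', hasc⟩ := ht.of_cons
    have hle := rankLE_sigmaT_mul_self hasc
    rw [← ht.1.2, wordProd_cons]
    rcases List.sublist_cons_iff.mp hs with hs | ⟨r, rfl, hr⟩
    · exact (ih ht' hs).trans hle
    · rw [wordProd_cons]
      exact ((ih ht' hr).trans hle).sigmaT_mul hasc

theorem exists_sublist_of_rankLE (ht : IsReducedWord n w t) (h : RankLE v w) :
    ∃ s, IsReducedWord n v s ∧ s <+ t := by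
  induction t generalizing w v with
  | nil =>
    obtain rfl : w = 1 := ht.1.2.symm
    exact ⟨[], h.eq_one ▸ ht, List.Sublist.refl []⟩
  | cons i t ih =>
    obtain ⟨ht', hasc⟩ := ht.of_cons
    obtain ⟨h₁, h₂⟩ := ht.1.1 i List.mem_cons_self
    obtain rfl : w = sigmaT i * wordProd t := by rw [← ht.1.2, wordProd_cons]
    rcases lt_or_gt_of_ne (v⁻¹.injective.ne (by omega : i ≠ i + 1)) with hv | hv
    · obtain ⟨s, hs, hst⟩ := ih ht' (h.of_ascent hv)
      exact ⟨s, hs, hst.cons i⟩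
    · obtain ⟨s, hs, hst⟩ := ih ht' (h.sigmaT_mul_of_descent hv)
      exact ⟨i :: s, by simpa using hs.cons h₁ h₂ (by simpa using hv), hst.cons_cons i⟩

theorem exists_rankLE_of_rankLE_of_ne (ht : IsReducedWord n w t) (h : RankLE v w) (hne : v ≠ w) :
    ∃ u su, IsReducedWord n u su ∧ su.length + 1 = t.length ∧ RankLE v u ∧ RankLE u w := by
  induction t generalizing w v with
  | nil =>
    obtain rfl : w = 1 := ht.1.2.symm
    exact absurd h.eq_one hne
  | cons i t ih =>
    obtain ⟨ht', hasc⟩ := ht.of_cons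
    obtain ⟨h₁, h₂⟩ := ht.1.1 i List.mem_cons_self
    obtain rfl : w = sigmaT i * wordProd t := by rw [← ht.1.2, wordProd_cons]
    have htop := rankLE_sigmaT_mul_self hasc
    rcases lt_or_gt_of_ne (v⁻¹.injective.ne (by omega : i ≠ i + 1)) with hv | hv
    · exact ⟨_, t, ht', rfl, h.of_ascent hv, htop⟩
    have hne' : sigmaT i * v ≠ wordProd t := fun heq => hne (by rw [← heq, sigmaT_mul_sigmaT_mul])
    obtain ⟨u, su, hu, hlen, hvu, hut⟩ := ih ht' (h.sigmaT_mul_of_descent hv) hne'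
    rcases lt_or_gt_of_ne (u⁻¹.injective.ne (by omega : i ≠ i + 1)) with hu' | hu'
    · refine ⟨sigmaT i * u, i :: su, hu.cons h₁ h₂ hu', by simp [hlen], ?_,
        (hut.trans htop).sigmaT_mul hasc⟩
      simpa using (hvu.trans (rankLE_sigmaT_mul_self hu')).sigmaT_mul hu'
    · exact ⟨_, t, ht', rfl, by simpa using (hvu.sigmaT_mul_left hu').trans hut, htop⟩

end Subword

section Bruhat

variable {n j : ℕ} {u v w : Perm ℕ} {t : List ℕ}

lemma bruhatLE_iff_rankLE (ht : IsReducedWord n w t) : BruhatLE n v w ↔ RankLE v w := by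
  refine ⟨fun ⟨s, t', hs, ht', hst⟩ => hs.1.2 ▸ rankLE_of_sublist ht' hst, fun h => ?_⟩
  obtain ⟨s, hs, hst⟩ := exists_sublist_of_rankLE ht h
  exact ⟨s, t, hs, ht, hst⟩

lemma BruhatLE.memSymm_left (h : BruhatLE n v w) : MemSymm n v :=
  let ⟨_, _, hs, _, _⟩ := h
  hs.1.memSymm

lemma BruhatLE.refl_left (h : BruhatLE n v w) : BruhatLE n v v :=
  let ⟨s, _, hs, _, _⟩ := h
  ⟨s, s, hs, hs, List.Sublist.refl s⟩

lemma BruhatLE.one_left (h : BruhatLE n v w) : BruhatLE n 1 v :=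
  let ⟨s, _, hs, _, _⟩ := h
  ⟨[], s, ⟨⟨by simp, rfl⟩, fun _ _ => Nat.zero_le _⟩, hs, List.nil_sublist s⟩

lemma BruhatLE.trans (h₁ : BruhatLE n u v) (h₂ : BruhatLE n v w) : BruhatLE n u w := by
  obtain ⟨-, t, -, ht, -⟩ := id h₂
  obtain ⟨-, t', -, ht', -⟩ := id h₁
  rw [bruhatLE_iff_rankLE ht] at h₂ ⊢
  exact ((bruhatLE_iff_rankLE ht').mp h₁).trans h₂

lemma BruhatLE.antisymm (h₁ : BruhatLE n v w) (h₂ : BruhatLE n w v) : v = w := by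
  obtain ⟨-, t, -, ht, -⟩ := id h₂
  obtain ⟨-, t', -, ht', -⟩ := id h₁
  exact ((bruhatLE_iff_rankLE ht').mp h₁).antisymm ((bruhatLE_iff_rankLE ht).mp h₂)

lemma isPartialOrder_idealLE (n : ℕ) (w : Perm ℕ) : IsPartialOrder (IdealB n w) (IdealLE n w) where
  refl a := a.2.refl_left
  trans _ _ _ := BruhatLE.trans
  antisymm _ _ h₁ h₂ := Subtype.ext (h₁.antisymm h₂)

lemma sigmaT_bruhatLE_iff (ht : IsReducedWord n w t) : BruhatLE n (sigmaT j) w ↔ j ∈ t := by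
  refine ⟨fun h => ?_, fun hj => ?_⟩
  · obtain ⟨s, hs, hst⟩ := exists_sublist_of_rankLE ht ((bruhatLE_iff_rankLE ht).mp h)
    exact hst.subset (by simp [hs.eq_singleton])
  · obtain ⟨h₁, h₂⟩ := ht.1.1 j hj
    exact ⟨[j], t, isReducedWord_singleton h₁ h₂, ht, List.singleton_sublist.mpr hj⟩

lemma supp_eq_setOf_mem (ht : IsReducedWord n w t) : supp n w = {j | j ∈ t} := by
  ext j
  exact ⟨fun ⟨t', ht', hj⟩ => (sigmaT_bruhatLE_iff ht).mp ((sigmaT_bruhatLE_iff ht').mpr hj),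
    fun hj => ⟨t, ht, hj⟩⟩

lemma sigmaT_bruhatLE_iff_mem_supp (ht : IsReducedWord n w t) :
    BruhatLE n (sigmaT j) w ↔ j ∈ supp n w := by
  rw [sigmaT_bruhatLE_iff ht, supp_eq_setOf_mem ht, Set.mem_ofPred_eq]

lemma exists_eq_sigmaT_of_atom (hu : MemSymm n u) (hne : u ≠ 1)
    (hatom : ∀ b, BruhatLE n b u → b = 1 ∨ b = u) : ∃ j, u = sigmaT j := by
  obtain ⟨_ | ⟨j, s⟩, hs⟩ := hu.exists_isReducedWord
  · exact absurd hs.1.2.symm hne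
  · exact ⟨j, ((hatom _ ((sigmaT_bruhatLE_iff hs).mpr List.mem_cons_self)).resolve_left
      (sigmaT_ne_one j)).symm⟩

lemma supp_diff_eq_singleton {a b : List ℕ} {i : ℕ} (hw : IsReducedWord n w (a ++ i :: b))
    (hv : IsReducedWord n v (a ++ b)) (hne : (supp n w \ supp n v).Nonempty) :
    supp n w \ supp n v = {i} := by
  refine Set.eq_singleton_iff_nonempty_unique_mem.mpr ⟨hne, fun j hj => ?_⟩
  simp only [supp_eq_setOf_mem hw, supp_eq_setOf_mem hv, Set.mem_sdiff, Set.mem_ofPred_eq,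
    List.mem_append, List.mem_cons] at hj
  tauto

lemma exists_deletion_of_coatom (ht : IsReducedWord n w t) (hvw : BruhatLE n v w) (hne : v ≠ w)
    (hcoatom : ∀ u, BruhatLE n u w → BruhatLE n v u → u = v ∨ u = w) :
    ∃ a i b, t = a ++ i :: b ∧ IsReducedWord n v (a ++ b) := by
  rw [bruhatLE_iff_rankLE ht] at hvw
  obtain ⟨u, su, hu, hlen, hvu, huw⟩ := exists_rankLE_of_rankLE_of_ne ht hvw hne
  have huw' : u ≠ w := by
    rintro rfl
    have := hu.length_eq ht
    omega
  obtain rfl : u = v := by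
    refine (hcoatom u ?_ ?_).resolve_right huw'
    exacts [(bruhatLE_iff_rankLE ht).mpr huw, (bruhatLE_iff_rankLE hu).mpr hvu]
  obtain ⟨s, hs, hst⟩ := exists_sublist_of_rankLE ht hvw
  obtain ⟨a, i, b, rfl, rfl⟩ :=
    hst.exists_eq_append_cons_of_length_add_one (by rw [hs.length_eq hu, hlen])
  exact ⟨a, i, b, rfl, hs⟩

end Bruhat

section ProductWithChain

variable {α X Y : Type*} {r : α → α → Prop} {rX : X → X → Prop} {rY : Y → Y → Prop}

def prodC2 (rX : X → X → Prop) (p q : Bool × X) : Prop := p.1 ≤ q.1 ∧ rX p.2 q.2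

lemma RelIsomorphic.trans (h₁ : RelIsomorphic r rX) (h₂ : RelIsomorphic rX rY) :
    RelIsomorphic r rY :=
  let ⟨e₁, h₁⟩ := h₁
  let ⟨e₂, h₂⟩ := h₂
  ⟨e₁.trans e₂, fun a b => (h₁ a b).trans (h₂ _ _)⟩

lemma RelIsomorphic.prodC2 (h : RelIsomorphic rX rY) : RelIsomorphic (prodC2 rX) (prodC2 rY) :=
  let ⟨e, h⟩ := h
  ⟨(Equiv.refl Bool).prodCongr e, fun p q => and_congr Iff.rfl (h p.2 q.2)⟩

lemma eq_symm_false_or_eq_symm_true (e : α ≃ Bool × X) (a : α) :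
    a = e.symm (false, (e a).2) ∨ a = e.symm (true, (e a).2) := by
  rcases h : (e a).1
  · exact Or.inl (e.eq_symm_apply.mpr (Prod.ext h rfl))
  · exact Or.inr (e.eq_symm_apply.mpr (Prod.ext h rfl))

lemma apply_top_of_relIsomorphic_prodC2 (e : α ≃ Bool × X)
    (he : ∀ a b, r a b ↔ prodC2 rX (e a) (e b)) {top : α} (htop : ∀ a, r a top) :
    e top = (true, (e top).2) ∧ ∀ x, rX x (e top).2 := by
  have h (q : Bool × X) : prodC2 rX q (e top) := by simpa [he] using htop (e.symm q)
  exact ⟨Prod.ext (by simpa [Bool.le_iff_imp] using (h (true, (e top).2)).1) rfl,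
    fun x => (h (false, x)).2⟩

lemma apply_bot_of_relIsomorphic_prodC2 (e : α ≃ Bool × X)
    (he : ∀ a b, r a b ↔ prodC2 rX (e a) (e b)) {bot : α} (hbot : ∀ a, r bot a) :
    e bot = (false, (e bot).2) ∧ ∀ x, rX (e bot).2 x := by
  have h (q : Bool × X) : prodC2 rX (e bot) q := by simpa [he] using hbot (e.symm q)
  exact ⟨Prod.ext (by simpa [Bool.le_iff_imp] using (h (false, (e bot).2)).1) rfl,
    fun x => (h (false, x)).2⟩

/-- In `C₂ × X` with `X` bounded, `(0, ⊤)` is a coatom with down-set `X`, and `(1, ⊥)` is an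
atom not below it. -/
theorem exists_coatom_of_relIsomorphic_prodC2 [IsPartialOrder X rX] (e : α ≃ Bool × X)
    (he : ∀ a b, r a b ↔ prodC2 rX (e a) (e b)) {top bot : α} (htop : ∀ a, r a top)
    (hbot : ∀ a, r bot a) :
    ∃ c, c ≠ top ∧ (∀ a, r c a → a = c ∨ a = top) ∧
      RelIsomorphic rX (fun a b : {a // r a c} => r a b) ∧
      ∃ d, ¬r d c ∧ ∀ a, r a d → a = bot ∨ a = d := by
  obtain ⟨hetop, hx₁⟩ := apply_top_of_relIsomorphic_prodC2 e he htop
  obtain ⟨hebot, hx₀⟩ := apply_bot_of_relIsomorphic_prodC2 e he hbot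
  set x₁ := (e top).2
  set x₀ := (e bot).2
  have hle (a : α) (q : Bool × X) : r (e.symm q) a ↔ prodC2 rX q (e a) := by simp [he]
  have hge (a : α) (q : Bool × X) : r a (e.symm q) ↔ prodC2 rX (e a) q := by simp [he]
  have hcoatom (a : α) (ha : r (e.symm (false, x₁)) a) : a = e.symm (false, x₁) ∨ a = top := by
    have hx : (e a).2 = x₁ := antisymm (hx₁ _) ((hle a _).mp ha).2
    rw [← e.symm_apply_apply top, hetop, ← hx]
    exact eq_symm_false_or_eq_symm_true e a
  have hdown : RelIsomorphic rX (fun a b : {a // r a (e.symm (false, x₁))} => r a b) := by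
    refine ⟨⟨fun x => ⟨e.symm (false, x), (hge _ _).mpr (by simp [prodC2, hx₁])⟩,
      fun a => (e a).2, fun x => by simp, fun ⟨a, ha⟩ => Subtype.ext ?_⟩,
      fun x y => by simp [he, prodC2]⟩
    have hfst : (e a).1 = false := by simpa [Bool.le_iff_imp] using ((hge a _).mp ha).1
    exact e.symm_apply_eq.mpr (Prod.ext hfst.symm rfl)
  have hatom (a : α) (ha : r a (e.symm (true, x₀))) : a = bot ∨ a = e.symm (true, x₀) := by
    have hx : (e a).2 = x₀ := antisymm ((hge a _).mp ha).2 (hx₀ _)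
    rw [← e.symm_apply_apply bot, hebot, ← hx]
    exact eq_symm_false_or_eq_symm_true e a
  exact ⟨_, fun h => by simpa [hetop] using congrArg e h, hcoatom, hdown, e.symm (true, x₀),
    by simp [he, prodC2], hatom⟩

end ProductWithChain

lemma relIsomorphic_downset_idealB {n : ℕ} {v w : Perm ℕ} (hvw : BruhatLE n v w) :
    RelIsomorphic (fun a b : {a : IdealB n w // IdealLE n w a ⟨v, hvw⟩} => IdealLE n w a b)
      (IdealLE n v) :=
  ⟨⟨fun a => ⟨a.1.1, a.2⟩, fun b => ⟨⟨b.1, b.2.trans hvw⟩, b.2⟩, fun _ => rfl, fun _ => rfl⟩,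
    fun _ _ => Iff.rfl⟩

/-- Lemma: prism iff B(w) ≅ C₂ × B(v) for a coatom v obtained by
deleting a single letter i, with supp(w) \ supp(v) = {i}. -/
theorem prism_iff_exists_factor (n : ℕ) (w : Equiv.Perm ℕ) (hw : MemSymm n w) :
    IsPrism n w ↔
      ∃ (v : Equiv.Perm ℕ) (i : ℕ), MemSymm n v ∧ 1 ≤ i ∧ i ≤ n - 1 ∧
        BruhatLE n v w ∧
        supp n w \ supp n v = {i} ∧
        (∃ a b : List ℕ, IsReducedWord n w (a ++ i :: b) ∧ IsReducedWord n v (a ++ b)) ∧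
        IsoC2TimesIdeal n w v := by
  constructor
  · rintro ⟨X, rX, hX, e, he⟩
    obtain ⟨t, ht⟩ := hw.exists_isReducedWord
    have hww : BruhatLE n w w := ⟨t, t, ht, ht, List.Sublist.refl t⟩
    obtain ⟨⟨v, hvw⟩, hne, hcoatom, hiso, ⟨u, huw⟩, huv, hatom⟩ :=
      exists_coatom_of_relIsomorphic_prodC2 e he (top := ⟨w, hww⟩) (bot := ⟨1, hww.one_left⟩)
        (fun a => a.2) (fun a => a.2.one_left)
    obtain ⟨a, i, b, rfl, hv⟩ := exists_deletion_of_coatom ht hvw (fun h => hne (Subtype.ext h))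
      fun u huw hvu => (hcoatom ⟨u, huw⟩ hvu).imp (congrArg Subtype.val) (congrArg Subtype.val)
    obtain ⟨j, rfl⟩ := exists_eq_sigmaT_of_atom huw.memSymm_left
      (fun h => huv (h ▸ hvw.one_left))
      fun c hc => (hatom ⟨c, hc.trans huw⟩ hc).imp (congrArg Subtype.val) (congrArg Subtype.val)
    have hj : j ∈ supp n w \ supp n v := ⟨(sigmaT_bruhatLE_iff_mem_supp ht).mp huw,
      fun hj => huv ((sigmaT_bruhatLE_iff_mem_supp hv).mpr hj)⟩
    obtain ⟨h₁, h₂⟩ := ht.1.1 i (by simp)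
    exact ⟨v, i, hvw.memSymm_left, h₁, h₂, hvw, supp_diff_eq_singleton ht hv ⟨j, hj⟩,
      ⟨a, b, ht, hv⟩,
      RelIsomorphic.trans ⟨e, he⟩ (hiso.trans (relIsomorphic_downset_idealB hvw)).prodC2⟩
  · rintro ⟨v, -, -, -, -, -, -, -, hiso⟩
    exact ⟨IdealB n v, IdealLE n v, isPartialOrder_idealLE n v, hiso⟩
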